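/- arXiv:1204.3700 — 4 statements merged into one kernel-verified Lean document; each statement's English description precedes it below -/
import Mathlib

section
/- Let A ∈ ℝ^{n×N} be a Parseval frame and let T ⊆ {1,…,N} with |T| < n. If the matrix A_{T^c} A_{T^c}* is invertible, then ‖A_T A_T*‖₂ < 1 and ‖A_{T^c} A_{T^c}*‖₂ = 1. -/
open Matrix Finset Filter Topology

/-- Euclidean norm of a vector. -/
noncomputable def enorm {k : ℕ} (x : Fin k → ℝ) : ℝ := Real.sqrt (∑ i, x i ^ 2)

/-- `x` has at most `s` nonzero entries. -/
def IsSparse {k : ℕ} (s : ℕ) (x : Fin k → ℝ) : Prop :=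
  (Finset.univ.filter fun i => x i ≠ 0).card ≤ s

/-- Spectral norm (ℓ²-operator norm) of a matrix. -/
noncomputable def specNorm {m k : Type*} [Fintype m] [Fintype k] [DecidableEq k]
    (M : Matrix m k ℝ) : ℝ :=
  ‖LinearMap.toContinuousLinearMap (Matrix.toEuclideanLin M)‖

/-- `cols A T` is the submatrix of `A` consisting of the columns indexed by `T`. -/
def cols {n N : ℕ} (A : Matrix (Fin n) (Fin N) ℝ) (T : Finset (Fin N)) :
    Matrix (Fin n) {i : Fin N // i ∈ T} ℝ := Matrix.of fun r c => A r c.1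

/-- `subv x T` is the subvector of `x` consisting of the entries indexed by `T`. -/
def subv {N : ℕ} (x : Fin N → ℝ) (T : Finset (Fin N)) : {i : Fin N // i ∈ T} → ℝ :=
  fun i => x i.1

/-- The feedback term `(A_T* A_T)⁻¹ A_T* A_{Tᶜ} x_{Tᶜ}`. -/
noncomputable def fb {n N : ℕ} (A : Matrix (Fin n) (Fin N) ℝ) (T : Finset (Fin N))
    (x : Fin N → ℝ) : {i : Fin N // i ∈ T} → ℝ :=
  ((cols A T)ᵀ * cols A T)⁻¹ *ᵥ ((cols A T)ᵀ *ᵥ (cols A Tᶜ *ᵥ subv x Tᶜ))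

/-! Write `P = A_T A_Tᵀ` and `Q = A_{Tᶜ} A_{Tᶜ}ᵀ`. The Parseval identity says `P + Q = 1` with
both summands positive, so their Rayleigh quotients lie in `[0, 1]`, and for a positive operator
the norm is the supremum of its Rayleigh quotients. If `‖P‖ = 1` were in the resolvent set of `P`
(that is, `Q = 1 - P` invertible), the Rayleigh quotients of `P` would stay uniformly below `1`.
Since `|T| < n`, some `v ≠ 0` lies in the kernel of `A_Tᵀ`; then `Q v = v`, so `‖Q‖ = 1`. -/

open WithLp

namespace ContinuousLinearMap

variable {𝕜 E : Type*} [RCLike 𝕜] [NormedAddCommGroup E] [InnerProductSpace 𝕜 E]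
  {T : E →L[𝕜] E}

theorem IsPositive.rayleighQuotient_nonneg (hT : T.IsPositive) (x : E) :
    0 ≤ T.rayleighQuotient x :=
  div_nonneg (hT.re_inner_nonneg_left x) (sq_nonneg _)

theorem rayleighQuotient_le_one (hT : (1 - T).IsPositive) (x : E) :
    T.rayleighQuotient x ≤ 1 := by
  have h := hT.re_inner_nonneg_left x
  rw [_root_.sub_apply, one_apply_eq_self, inner_sub_left, map_sub, inner_self_eq_norm_sq,
    sub_nonneg] at h
  exact div_le_one_of_le₀ h (sq_nonneg _)

theorem IsPositive.norm_le_one (hT : T.IsPositive) (hT' : (1 - T).IsPositive) : ‖T‖ ≤ 1 := by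
  rw [norm_eq_iSup_rayleighQuotient T hT.isSymmetric]
  exact ciSup_le fun x ↦ abs_le.mpr
    ⟨by linarith [hT.rayleighQuotient_nonneg x], rayleighQuotient_le_one hT' x⟩

theorem IsPositive.norm_lt_one_of_isUnit_one_sub (hT : T.IsPositive) (hT' : (1 - T).IsPositive)
    (hu : IsUnit (1 - T)) : ‖T‖ < 1 := by
  nontriviality E
  refine (hT.norm_le_one hT').lt_of_ne fun h ↦ ?_
  obtain ⟨ε, hε, hle⟩ := T.rayleighQuotient_le_of_norm_mem_resolventSet
    (by simpa [spectrum.mem_resolventSet_iff, h] using hu)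
  have : ‖T‖ ≤ ‖T‖ - ε :=
    (norm_eq_iSup_rayleighQuotient T hT.isSymmetric).trans_le
      (ciSup_le fun x ↦ (abs_of_nonneg (hT.rayleighQuotient_nonneg x)).trans_le (hle x))
  linarith

theorem IsPositive.norm_eq_one_of_apply_eq_self (hT : T.IsPositive) (hT' : (1 - T).IsPositive)
    {x : E} (hx : x ≠ 0) (hTx : T x = x) : ‖T‖ = 1 := by
  refine (hT.norm_le_one hT').antisymm ?_
  have h := T.le_opNorm x
  rw [hTx] at h
  exact (le_mul_iff_one_le_left (norm_pos_iff.mpr hx)).mp h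

end ContinuousLinearMap

namespace Matrix

theorem exists_mulVec_eq_zero_of_card_lt {m n K : Type*} [Fintype m] [Fintype n] [Field K]
    (M : Matrix m n K) (h : Fintype.card m < Fintype.card n) : ∃ v ≠ 0, M *ᵥ v = 0 := by
  obtain ⟨v, hv, hv0⟩ := (Submodule.ne_bot_iff _).mp
    (LinearMap.ker_ne_bot_of_finrank_lt (f := M.mulVecLin) (by simpa using h))
  exact ⟨v, hv0, hv⟩

theorem isPositive_toEuclideanCLM_mul_transpose {m n : Type*} [Fintype m] [Fintype n]
    [DecidableEq n] (B : Matrix n m ℝ) : (toEuclideanCLM (𝕜 := ℝ) (B * Bᵀ)).IsPositive := by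
  rw [← ContinuousLinearMap.isPositive_toLinearMap_iff,
    coe_toEuclideanCLM_eq_toEuclideanLin, isPositive_toEuclideanLin_iff]
  simpa using posSemidef_self_mul_conjTranspose B

end Matrix

theorem specNorm_eq_norm_toEuclideanCLM {m : Type*} [Fintype m] [DecidableEq m]
    (M : Matrix m m ℝ) : specNorm M = ‖toEuclideanCLM (𝕜 := ℝ) M‖ :=
  rfl

theorem cols_mul_transpose_add_compl {n N : ℕ} (A : Matrix (Fin n) (Fin N) ℝ)
    (T : Finset (Fin N)) : cols A T * (cols A T)ᵀ + cols A Tᶜ * (cols A Tᶜ)ᵀ = A * Aᵀ := by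
  ext i k
  simp only [Matrix.add_apply, mul_apply, cols, of_apply, transpose_apply]
  rw [Finset.sum_coe_sort T (fun j ↦ A i j * A k j),
    Finset.sum_coe_sort Tᶜ (fun j ↦ A i j * A k j)]
  exact Finset.sum_add_sum_compl T _

theorem stmt_0_general {n N : ℕ} (A : Matrix (Fin n) (Fin N) ℝ)
    (hParseval : A * Aᵀ = 1) (T : Finset (Fin N)) (hT : T.card < n)
    (hinv : IsUnit (cols A Tᶜ * (cols A Tᶜ)ᵀ)) :
    specNorm (cols A T * (cols A T)ᵀ) < 1 ∧ specNorm (cols A Tᶜ * (cols A Tᶜ)ᵀ) = 1 := by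
  rw [specNorm_eq_norm_toEuclideanCLM, specNorm_eq_norm_toEuclideanCLM]
  set P := toEuclideanCLM (𝕜 := ℝ) (cols A T * (cols A T)ᵀ) with hPdef
  set Q := toEuclideanCLM (𝕜 := ℝ) (cols A Tᶜ * (cols A Tᶜ)ᵀ)
  have hPQ : P + Q = 1 := by
    rw [← map_add, cols_mul_transpose_add_compl, hParseval, map_one]
  have hQ : 1 - P = Q := by rw [← hPQ, add_sub_cancel_left]
  have hP : 1 - Q = P := by rw [← hPQ, add_sub_cancel_right]
  have hP0 : P.IsPositive := isPositive_toEuclideanCLM_mul_transpose _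
  have hQ0 : Q.IsPositive := isPositive_toEuclideanCLM_mul_transpose _
  obtain ⟨v, hv0, hv⟩ := (cols A T)ᵀ.exists_mulVec_eq_zero_of_card_lt (by simpa using hT)
  have hPv : P (toLp 2 v) = 0 := by
    rw [hPdef, toEuclideanCLM_toLp, ← mulVec_mulVec, hv, mulVec_zero, toLp_zero]
  refine ⟨hP0.norm_lt_one_of_isUnit_one_sub (hQ ▸ hQ0) (hQ ▸ hinv.map _),
    hQ0.norm_eq_one_of_apply_eq_self (hP ▸ hP0) (x := toLp 2 v) (by simpa using hv0) ?_⟩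
  rw [← hQ, _root_.sub_apply, hPv, sub_zero, one_apply_eq_self]

/-- If `A` is a Parseval frame, `|T| < n` and `A_{Tᶜ} A_{Tᶜ}*` is invertible,
then `‖A_T A_T*‖₂ < 1` and `‖A_{Tᶜ} A_{Tᶜ}*‖₂ = 1`. -/
theorem stmt_0 {n N : ℕ} (hnN : n < N) (A : Matrix (Fin n) (Fin N) ℝ)
    (hParseval : A * Aᵀ = 1) (T : Finset (Fin N)) (hT : T.card < n)
    (hinv : IsUnit (cols A Tᶜ * (cols A Tᶜ)ᵀ)) :
    specNorm (cols A T * (cols A T)ᵀ) < 1 ∧ specNorm (cols A Tᶜ * (cols A Tᶜ)ᵀ) = 1 :=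
  stmt_0_general A hParseval T hT hinv
end

section
/- Let A ∈ ℝ^{n×N} be a Parseval frame and T ⊆ {1,…,N} with |T| = s < n such that A_T* A_T and A_{T^c} A_{T^c}* are invertible. Suppose the sequence {x^k} follows the NST+HT iteration and that T_k = T for all k ≥ j for some integer j. Then x^k converges as k → ∞ to the vector x^♮ given by x^♮_T = x^j_T + (A_T* A_T)^{-1} A_T* A_{T^c} x^j_{T^c} and x^♮_{T^c} = A_{T^c}* ( I − A_T (A_T* A_T)^{-1} A_T* ) A_{T^c} x^j_{T^c}. -/
open Matrix Finset Filter Topology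

/-!
Once the support is frozen at `T`, the iteration is linear in the blocks `p = x_T`, `q = x_{Tᶜ}`:
with `B = A_T`, `C = A_{Tᶜ}` and the Parseval identity `B Bᵀ + C Cᵀ = 1`, one step reads
`p ↦ p + Bᵀ C q`, `q ↦ Cᵀ C q`. Hence `C q_k = (1 - B Bᵀ)ᵏ C q_0`, and moving `Bᵀ` through these
powers writes both blocks in terms of the Neumann partial sums `∑_{l<k} (1 - BᵀB)ˡ`. The Gram
matrix `BᵀB` is positive definite and `1 - BᵀB`, a principal block of the projection `1 - AᵀA`,
is positive semidefinite, so the spectrum of `1 - BᵀB` lies in `[0, 1)` and the partial sums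
converge to `(BᵀB)⁻¹`.
-/

open scoped ComplexOrder

theorem tendsto_geom_sum_ringInverse {R : Type*} [Ring R] [TopologicalSpace R]
    [IsTopologicalRing R] {x : R} (hx : IsUnit (1 - x)) (h : Tendsto (x ^ ·) atTop (𝓝 0)) :
    Tendsto (fun m => ∑ l ∈ range m, x ^ l) atTop (𝓝 (Ring.inverse (1 - x))) := by
  have hsum : ∀ m, ∑ l ∈ range m, x ^ l = Ring.inverse (1 - x) * (1 - x ^ m) := fun m => by
    rw [← mul_neg_geom_sum, Ring.inverse_mul_cancel_left _ _ hx]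
  simpa only [hsum, sub_zero, mul_one] using
    ((tendsto_const_nhds (x := (1 : R))).sub h).const_mul (Ring.inverse (1 - x))

namespace Matrix

section Ring

variable {α ι m : Type*} [Ring α] [Fintype ι] [Fintype m] [DecidableEq ι] [DecidableEq m]

theorem mul_one_sub_mul_pow (B : Matrix m ι α) (C : Matrix ι m α) (k : ℕ) :
    C * (1 - B * C) ^ k = (1 - C * B) ^ k * C := by
  have hswap : C * (1 - B * C) = (1 - C * B) * C := by
    simp only [Matrix.mul_sub, Matrix.sub_mul, Matrix.mul_one, Matrix.one_mul, Matrix.mul_assoc]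
  induction k with
  | zero => simp
  | succ k ih =>
    rw [pow_succ, ← Matrix.mul_assoc, ih, Matrix.mul_assoc, hswap, ← Matrix.mul_assoc, ← pow_succ]

theorem one_sub_mul_pow (B : Matrix m ι α) (C : Matrix ι m α) (k : ℕ) :
    (1 - B * C) ^ k = 1 - B * (∑ l ∈ range k, (1 - C * B) ^ l) * C := by
  induction k with
  | zero => simp
  | succ k ih =>
    rw [pow_succ', ih, geom_sum_succ]
    simp only [Matrix.mul_sub, Matrix.sub_mul, Matrix.mul_add, Matrix.add_mul, Matrix.mul_one,
      Matrix.one_mul, Matrix.mul_assoc]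
    abel

end Ring

theorem PosDef.tendsto_one_sub_pow {𝕜 n : Type*} [RCLike 𝕜] [Fintype n] [DecidableEq n]
    {G : Matrix n n 𝕜} (hG : G.PosDef) (hG1 : (1 - G).PosSemidef) :
    Tendsto ((1 - G) ^ ·) atTop (𝓝 0) := by
  set μ := hG.isHermitian.eigenvalues
  set conj := Unitary.conjStarAlgAut 𝕜 _ hG.isHermitian.eigenvectorUnitary
  have hdiag : 1 - G = conj (diagonal fun i => ((1 - μ i : ℝ) : 𝕜)) := by
    conv_lhs => rw [hG.isHermitian.spectral_theorem]
    rw [← map_one conj, ← map_sub, ← diagonal_one, diagonal_sub]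
    simp [μ]
  have hμ : ∀ i, ‖((1 - μ i : ℝ) : 𝕜)‖ < 1 := fun i => by
    have hpos := hG.isHermitian.posDef_iff_eigenvalues_pos.mp hG i
    have hle : 0 ≤ 1 - μ i := by
      rw [hdiag, Unitary.conjStarAlgAut_apply,
        Unitary.isUnit_coe.posSemidef_star_right_conjugate_iff, posSemidef_diagonal_iff] at hG1
      exact_mod_cast hG1 i
    rw [RCLike.norm_ofReal, abs_lt]
    constructor <;> linarith
  have hpow : ∀ m, (1 - G) ^ m = conj (diagonal fun i => ((1 - μ i : ℝ) : 𝕜) ^ m) := fun m => by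
    rw [hdiag, ← map_pow, diagonal_pow]; rfl
  have hcont : Continuous conj := by
    rw [show ⇑conj = fun X => _ * X * _ from funext fun X => Unitary.conjStarAlgAut_apply _ X]
    fun_prop
  simp_rw [hpow]
  rw [← map_zero conj, ← diagonal_zero]
  exact (hcont.tendsto _).comp <| (continuous_id.matrix_diagonal.tendsto _).comp <|
    tendsto_pi_nhds.2 fun i => tendsto_pow_atTop_nhds_zero_of_norm_lt_one (hμ i)

theorem PosDef.tendsto_geom_sum_one_sub {𝕜 n : Type*} [RCLike 𝕜] [Fintype n]
    [DecidableEq n] {G : Matrix n n 𝕜} (hG : G.PosDef) (hG1 : (1 - G).PosSemidef) :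
    Tendsto (fun k => ∑ l ∈ range k, (1 - G) ^ l) atTop (𝓝 G⁻¹) := by
  simpa only [sub_sub_cancel, nonsing_inv_eq_ringInverse] using
    tendsto_geom_sum_ringInverse (by simpa using hG.isUnit) (hG.tendsto_one_sub_pow hG1)

theorem posSemidef_one_sub_conjTranspose_mul_self {𝕜 m n : Type*} [RCLike 𝕜] [Fintype m]
    [Fintype n] [DecidableEq m] [DecidableEq n] {A : Matrix m n 𝕜} (hA : A * Aᴴ = 1) :
    (1 - Aᴴ * A).PosSemidef := by
  have hidem : Aᴴ * A * (Aᴴ * A) = Aᴴ * A := by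
    rw [Matrix.mul_assoc, ← Matrix.mul_assoc A, hA, Matrix.one_mul]
  have hsq : 1 - Aᴴ * A = (1 - Aᴴ * A)ᴴ * (1 - Aᴴ * A) := by
    simp only [conjTranspose_sub, conjTranspose_one, conjTranspose_mul, conjTranspose_conjTranspose,
      sub_mul, mul_sub, one_mul, mul_one, hidem]
    abel
  rw [hsq]
  exact posSemidef_conjTranspose_mul_self _

end Matrix

section BlockIteration

variable {α ι κ m : Type*} [Ring α] [Fintype ι] [Fintype κ] [Fintype m] [DecidableEq ι]
  [DecidableEq m] {B : Matrix m ι α} {C : Matrix m κ α} {p : ℕ → ι → α} {q : ℕ → κ → α}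

omit [DecidableEq ι] in
theorem mulVec_offSupport_eq_pow (hBC : C * Cᵀ = 1 - B * Bᵀ)
    (hq : ∀ k, q (k + 1) = Cᵀ *ᵥ (C *ᵥ q k)) (k : ℕ) :
    C *ᵥ q k = (1 - B * Bᵀ) ^ k *ᵥ (C *ᵥ q 0) := by
  induction k with
  | zero => simp
  | succ k ih => rw [hq, mulVec_mulVec, hBC, ih, mulVec_mulVec, ← pow_succ']

theorem onSupport_eq_add_geom_sum (hBC : C * Cᵀ = 1 - B * Bᵀ)
    (hp : ∀ k, p (k + 1) = p k + Bᵀ *ᵥ (C *ᵥ q k)) (hq : ∀ k, q (k + 1) = Cᵀ *ᵥ (C *ᵥ q k))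
    (k : ℕ) :
    p k = p 0 + ((∑ l ∈ range k, (1 - Bᵀ * B) ^ l) * Bᵀ) *ᵥ (C *ᵥ q 0) := by
  induction k with
  | zero => simp
  | succ k ih =>
    rw [hp, ih, mulVec_offSupport_eq_pow hBC hq k, mulVec_mulVec _ Bᵀ, mul_one_sub_mul_pow B Bᵀ k,
      add_assoc, ← add_mulVec, sum_range_succ, Matrix.add_mul]

theorem offSupport_succ_eq (hBC : C * Cᵀ = 1 - B * Bᵀ)
    (hq : ∀ k, q (k + 1) = Cᵀ *ᵥ (C *ᵥ q k)) (k : ℕ) :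
    q (k + 1) = Cᵀ *ᵥ ((1 - B * (∑ l ∈ range k, (1 - Bᵀ * B) ^ l) * Bᵀ) *ᵥ (C *ᵥ q 0)) := by
  rw [hq, mulVec_offSupport_eq_pow hBC hq k, one_sub_mul_pow B Bᵀ k]

end BlockIteration

section BlockIterationLimit

variable {ι κ m : Type*} [Fintype ι] [Fintype κ] [Fintype m] [DecidableEq ι] [DecidableEq m]
  {B : Matrix m ι ℝ} {C : Matrix m κ ℝ} {p : ℕ → ι → ℝ} {q : ℕ → κ → ℝ}

theorem tendsto_onSupport (hG : (Bᵀ * B).PosDef) (hG1 : (1 - Bᵀ * B).PosSemidef)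
    (hBC : C * Cᵀ = 1 - B * Bᵀ) (hp : ∀ k, p (k + 1) = p k + Bᵀ *ᵥ (C *ᵥ q k))
    (hq : ∀ k, q (k + 1) = Cᵀ *ᵥ (C *ᵥ q k)) :
    Tendsto p atTop (𝓝 (p 0 + ((Bᵀ * B)⁻¹ * Bᵀ) *ᵥ (C *ᵥ q 0))) := by
  have hcont : Continuous fun S : Matrix ι ι ℝ => p 0 + (S * Bᵀ) *ᵥ (C *ᵥ q 0) := by fun_prop
  exact ((hcont.tendsto _).comp (hG.tendsto_geom_sum_one_sub hG1)).congr fun k =>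
    (onSupport_eq_add_geom_sum hBC hp hq k).symm

theorem tendsto_offSupport (hG : (Bᵀ * B).PosDef) (hG1 : (1 - Bᵀ * B).PosSemidef)
    (hBC : C * Cᵀ = 1 - B * Bᵀ) (hq : ∀ k, q (k + 1) = Cᵀ *ᵥ (C *ᵥ q k)) :
    Tendsto q atTop (𝓝 (Cᵀ *ᵥ ((1 - B * (Bᵀ * B)⁻¹ * Bᵀ) *ᵥ (C *ᵥ q 0)))) := by
  have hcont : Continuous fun S : Matrix ι ι ℝ => Cᵀ *ᵥ ((1 - B * S * Bᵀ) *ᵥ (C *ᵥ q 0)) := by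
    fun_prop
  rw [← tendsto_add_atTop_iff_nat 1]
  exact ((hcont.tendsto _).comp (hG.tendsto_geom_sum_one_sub hG1)).congr fun k =>
    (offSupport_succ_eq hBC hq k).symm

end BlockIterationLimit

section Support

variable {n N : ℕ} {A : Matrix (Fin n) (Fin N) ℝ} {T : Finset (Fin N)}

theorem subv_add (x y : Fin N → ℝ) (T : Finset (Fin N)) :
    subv (x + y) T = subv x T + subv y T := rfl

theorem subv_transpose_mulVec (A : Matrix (Fin n) (Fin N) ℝ) (T : Finset (Fin N))
    (w : Fin n → ℝ) :
    subv (Aᵀ *ᵥ w) T = (cols A T)ᵀ *ᵥ w := rfl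

theorem transpose_cols_mul_cols (A : Matrix (Fin n) (Fin N) ℝ) (T : Finset (Fin N)) :
    (cols A T)ᵀ * cols A T = (Aᵀ * A).submatrix Subtype.val Subtype.val := rfl

theorem mulVec_eq_cols_mulVec_add (A : Matrix (Fin n) (Fin N) ℝ) (T : Finset (Fin N))
    (w : Fin N → ℝ) : A *ᵥ w = cols A T *ᵥ subv w T + cols A Tᶜ *ᵥ subv w Tᶜ := by
  ext r
  simp only [Pi.add_apply, mulVec, dotProduct, cols, subv, of_apply]
  rw [sum_coe_sort T fun c => A r c * w c, sum_coe_sort Tᶜ fun c => A r c * w c,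
    sum_add_sum_compl]

theorem cols_mul_transpose_add (A : Matrix (Fin n) (Fin N) ℝ) (T : Finset (Fin N)) :
    cols A T * (cols A T)ᵀ + cols A Tᶜ * (cols A Tᶜ)ᵀ = A * Aᵀ := by
  ext r r'
  simp only [Matrix.add_apply, mul_apply, transpose_apply, cols, of_apply]
  rw [sum_coe_sort T fun c => A r c * A r' c, sum_coe_sort Tᶜ fun c => A r c * A r' c,
    sum_add_sum_compl]

theorem posDef_transpose_cols_mul_cols (h : IsUnit ((cols A T)ᵀ * cols A T)) :
    ((cols A T)ᵀ * cols A T).PosDef := by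
  have hpsd := posSemidef_conjTranspose_mul_self (cols A T)
  rw [conjTranspose_eq_transpose_of_trivial] at hpsd
  exact hpsd.posDef_iff_isUnit.2 h

theorem posSemidef_one_sub_transpose_cols_mul_cols (hA : A * Aᵀ = 1) (T : Finset (Fin N)) :
    (1 - (cols A T)ᵀ * cols A T).PosSemidef := by
  have hproj := posSemidef_one_sub_conjTranspose_mul_self (A := A) (by simpa using hA)
  rw [conjTranspose_eq_transpose_of_trivial] at hproj
  rw [transpose_cols_mul_cols, ← submatrix_one _ Subtype.val_injective]
  exact hproj.submatrix _

theorem tendsto_of_tendsto_subv {f : ℕ → Fin N → ℝ} {a : T → ℝ} {b : (Tᶜ : Finset (Fin N)) → ℝ}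
    (ha : Tendsto (fun k => subv (f k) T) atTop (𝓝 a))
    (hb : Tendsto (fun k => subv (f k) Tᶜ) atTop (𝓝 b)) :
    Tendsto f atTop (𝓝 fun i => if hi : i ∈ T then a ⟨i, hi⟩ else b ⟨i, mem_compl.2 hi⟩) := by
  refine tendsto_pi_nhds.2 fun i => ?_
  by_cases hi : i ∈ T
  · simp only [dif_pos hi]
    exact tendsto_pi_nhds.1 ha ⟨i, hi⟩
  · simp only [dif_neg hi]
    exact tendsto_pi_nhds.1 hb ⟨i, mem_compl.2 hi⟩

noncomputable def nstStep (A : Matrix (Fin n) (Fin N) ℝ) (x u : Fin N → ℝ) : Fin N → ℝ :=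
  x + (1 - Aᵀ * (A * Aᵀ)⁻¹ * A) *ᵥ (u - x)

variable {x u : Fin N → ℝ}

theorem nstStep_eq (hA : A * Aᵀ = 1) (hu1 : ∀ i ∈ T, u i = x i) (hu2 : ∀ i ∉ T, u i = 0) :
    nstStep A x u = u + Aᵀ *ᵥ (cols A Tᶜ *ᵥ subv x Tᶜ) := by
  have hres : A *ᵥ (x - u) = cols A Tᶜ *ᵥ subv x Tᶜ := by
    have hT : subv (x - u) T = 0 := funext fun c => by simp [subv, hu1 c c.2]
    have hTc : subv (x - u) Tᶜ = subv x Tᶜ := funext fun c => by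
      simp [subv, hu2 c (mem_compl.1 c.2)]
    rw [mulVec_eq_cols_mulVec_add A T, hT, hTc, mulVec_zero, zero_add]
  rw [nstStep, hA, inv_one, Matrix.mul_one, ← hres, sub_mulVec, one_mulVec, ← mulVec_mulVec]
  simp only [mulVec_sub]
  abel

theorem subv_nstStep (hA : A * Aᵀ = 1) (hu1 : ∀ i ∈ T, u i = x i) (hu2 : ∀ i ∉ T, u i = 0) :
    subv (nstStep A x u) T = subv x T + (cols A T)ᵀ *ᵥ (cols A Tᶜ *ᵥ subv x Tᶜ) := by
  rw [nstStep_eq hA hu1 hu2, subv_add, subv_transpose_mulVec]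
  congr 1
  exact funext fun c => hu1 c c.2

theorem subv_compl_nstStep (hA : A * Aᵀ = 1) (hu1 : ∀ i ∈ T, u i = x i)
    (hu2 : ∀ i ∉ T, u i = 0) :
    subv (nstStep A x u) Tᶜ = (cols A Tᶜ)ᵀ *ᵥ (cols A Tᶜ *ᵥ subv x Tᶜ) := by
  rw [nstStep_eq hA hu1 hu2, subv_add, subv_transpose_mulVec, add_eq_right]
  exact funext fun c => hu2 c (mem_compl.1 c.2)

end Support

theorem stmt_1_general {n N : ℕ} (A : Matrix (Fin n) (Fin N) ℝ)
    (hParseval : A * Aᵀ = 1)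
    (T : Finset (Fin N))
    (hgram : IsUnit ((cols A T)ᵀ * cols A T))
    (x u : ℕ → Fin N → ℝ) (Tk : ℕ → Finset (Fin N))
    (hu1 : ∀ k, ∀ i ∈ Tk k, u k i = x k i)
    (hu2 : ∀ k, ∀ i ∉ Tk k, u k i = 0)
    (hx : ∀ k, x (k+1) = x k + (1 - Aᵀ * (A * Aᵀ)⁻¹ * A) *ᵥ (u k - x k))
    (j : ℕ) (hT : ∀ k, j ≤ k → Tk k = T) :
    Filter.Tendsto x Filter.atTop (nhds (fun i =>
      if hi : i ∈ T then
        x j i + ((((cols A T)ᵀ * cols A T)⁻¹ * (cols A T)ᵀ) *ᵥ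
          (cols A Tᶜ *ᵥ subv (x j) Tᶜ)) ⟨i, hi⟩
      else
        ((cols A Tᶜ)ᵀ *ᵥ (((1 : Matrix (Fin n) (Fin n) ℝ) -
            cols A T * ((cols A T)ᵀ * cols A T)⁻¹ * (cols A T)ᵀ) *ᵥ
          (cols A Tᶜ *ᵥ subv (x j) Tᶜ))) ⟨i, Finset.mem_compl.mpr hi⟩)) := by
  have hon (k : ℕ) : ∀ i ∈ T, u (j + k) i = x (j + k) i := hT _ (j.le_add_right k) ▸ hu1 _
  have hoff (k : ℕ) : ∀ i ∉ T, u (j + k) i = 0 := hT _ (j.le_add_right k) ▸ hu2 _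
  have hp (k : ℕ) :=
    (congrArg (subv · T) (hx (j + k))).trans (subv_nstStep hParseval (hon k) (hoff k))
  have hq (k : ℕ) :=
    (congrArg (subv · Tᶜ) (hx (j + k))).trans (subv_compl_nstStep hParseval (hon k) (hoff k))
  have hBC : cols A Tᶜ * (cols A Tᶜ)ᵀ = 1 - cols A T * (cols A T)ᵀ :=
    eq_sub_of_add_eq' ((cols_mul_transpose_add A T).trans hParseval)
  have hG := posDef_transpose_cols_mul_cols hgram
  have hG1 := posSemidef_one_sub_transpose_cols_mul_cols hParseval T
  have hlimT := (tendsto_add_atTop_iff_nat (f := fun k => subv (x k) T) j).1 <| by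
    simpa only [add_comm _ j] using tendsto_onSupport (p := fun k => subv (x (j + k)) T)
      (q := fun k => subv (x (j + k)) Tᶜ) hG hG1 hBC hp hq
  have hlimTc := (tendsto_add_atTop_iff_nat (f := fun k => subv (x k) Tᶜ) j).1 <| by
    simpa only [add_comm _ j] using tendsto_offSupport (q := fun k => subv (x (j + k)) Tᶜ)
      hG hG1 hBC hq
  exact tendsto_of_tendsto_subv hlimT hlimTc

/-- convergence of NST+HT when the support stabilizes. -/
theorem stmt_1 {n N s : ℕ} (hnN : n < N) (A : Matrix (Fin n) (Fin N) ℝ)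
    (hParseval : A * Aᵀ = 1)
    (T : Finset (Fin N)) (hTcard : T.card = s) (hsn : s < n)
    (hgram : IsUnit ((cols A T)ᵀ * cols A T))
    (hcompl : IsUnit (cols A Tᶜ * (cols A Tᶜ)ᵀ))
    (x u : ℕ → Fin N → ℝ) (Tk : ℕ → Finset (Fin N))
    (hTkcard : ∀ k, (Tk k).card = s)
    (hTkmax : ∀ k, ∀ i ∈ Tk k, ∀ j ∉ Tk k, |x k j| ≤ |x k i|)
    (hu1 : ∀ k, ∀ i ∈ Tk k, u k i = x k i)
    (hu2 : ∀ k, ∀ i ∉ Tk k, u k i = 0)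
    (hx : ∀ k, x (k+1) = x k + (1 - Aᵀ * (A * Aᵀ)⁻¹ * A) *ᵥ (u k - x k))
    (j : ℕ) (hT : ∀ k, j ≤ k → Tk k = T) :
    Filter.Tendsto x Filter.atTop (nhds (fun i =>
      if hi : i ∈ T then
        x j i + ((((cols A T)ᵀ * cols A T)⁻¹ * (cols A T)ᵀ) *ᵥ
          (cols A Tᶜ *ᵥ subv (x j) Tᶜ)) ⟨i, hi⟩
      else
        ((cols A Tᶜ)ᵀ *ᵥ (((1 : Matrix (Fin n) (Fin n) ℝ) -
            cols A T * ((cols A T)ᵀ * cols A T)⁻¹ * (cols A T)ᵀ) *ᵥ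
          (cols A Tᶜ *ᵥ subv (x j) Tᶜ))) ⟨i, Finset.mem_compl.mpr hi⟩)) :=
  stmt_1_general A hParseval T hgram x u Tk hu1 hu2 hx j hT
end

section
/- Let A ∈ ℝ^{n×N} have full row rank and let σ_max be the largest eigenvalue of AA* (the squared largest singular value of A). If δ is an s-th order RIP constant for A with δ < 1, then for every s-sparse x ∈ ℝ^N one has ‖(AA*)^{-1/2} A x‖₂² ≥ ((1 − δ)/σ_max) ‖x‖₂²; that is, 1 − (1 − δ)/σ_max is an s-th order P-RIP constant for A. -/
open Matrix Finset Filter Topology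

/-- Euclidean norm of a vector. -/
noncomputable def eucNorm {k : ℕ} (x : Fin k → ℝ) : ℝ := Real.sqrt (∑ i, x i ^ 2)

/-- Square root of a positive semidefinite matrix (as in the older Mathlib). -/
noncomputable def Matrix.PosSemidef.sqrt {n 𝕜 : Type*} [Fintype n] [RCLike 𝕜] [PartialOrder 𝕜] [StarOrderedRing 𝕜]
    [DecidableEq n] {A : Matrix n n 𝕜} (hA : A.PosSemidef) : Matrix n n 𝕜 :=
  hA.1.eigenvectorUnitary.1 * diagonal ((↑) ∘ (√·) ∘ hA.1.eigenvalues) *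
    (star hA.1.eigenvectorUnitary : Matrix n n 𝕜)

/-! With `S = (AAᵀ)^{1/2}` and `w = S⁻¹Az` we have `‖Az‖² = wᵀ(AAᵀ)w ≤ σmax ‖w‖²`, because
`AAᵀ ≤ σmax • 1` in the Loewner order; combined with the RIP lower bound
`(1 - δ)‖z‖² ≤ ‖Az‖²` this is the claim. -/

lemma eucNorm_sq {k : ℕ} (x : Fin k → ℝ) : eucNorm x ^ 2 = x ⬝ᵥ x := by
  rw [eucNorm, Real.sq_sqrt (by positivity)]
  simp only [dotProduct, sq]

section

open scoped MatrixOrder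

variable {ι : Type*} [Fintype ι] [DecidableEq ι]

lemma Matrix.PosSemidef.sqrt_eq_cfcSqrt {M : Matrix ι ι ℝ} (hM : M.PosSemidef) :
    hM.sqrt = CFC.sqrt M := by
  rw [CFC.sqrt_eq_real_sqrt M hM.nonneg, cfcₙ_eq_cfc, hM.1.cfc_eq, IsHermitian.cfc,
    Unitary.conjStarAlgAut_apply]
  rfl

lemma Matrix.IsHermitian.le_algebraMap_of_eigenvalues_le {M : Matrix ι ι ℝ} (hM : M.IsHermitian)
    {σ : ℝ} (h : ∀ i, hM.eigenvalues i ≤ σ) : M ≤ algebraMap ℝ _ σ := by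
  refine le_algebraMap_of_spectrum_le (fun x hx ↦ ?_) hM.isSelfAdjoint
  rw [hM.spectrum_real_eq_range_eigenvalues] at hx
  obtain ⟨i, rfl⟩ := hx
  exact h i

lemma Matrix.dotProduct_mulVec_le_of_le_algebraMap {M : Matrix ι ι ℝ} {σ : ℝ}
    (h : M ≤ algebraMap ℝ _ σ) (w : ι → ℝ) : w ⬝ᵥ M *ᵥ w ≤ σ * (w ⬝ᵥ w) := by
  have := (Matrix.le_iff.mp h).dotProduct_mulVec_nonneg w
  rw [Algebra.algebraMap_eq_smul_one, sub_mulVec, smul_mulVec, one_mulVec, star_trivial,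
    dotProduct_sub, dotProduct_smul, smul_eq_mul] at this
  linarith

lemma Matrix.PosDef.dotProduct_self_le_of_le_algebraMap {M : Matrix ι ι ℝ} (hM : M.PosDef)
    {σ : ℝ} (h : M ≤ algebraMap ℝ _ σ) (v : ι → ℝ) :
    v ⬝ᵥ v ≤ σ * ((CFC.sqrt M)⁻¹ *ᵥ v ⬝ᵥ (CFC.sqrt M)⁻¹ *ᵥ v) := by
  set S := CFC.sqrt M
  set w := S⁻¹ *ᵥ v
  have hS : IsUnit S := (CFC.isUnit_sqrt_iff M hM.posSemidef.nonneg).mpr hM.isUnit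
  have hSw : S *ᵥ w = v := by
    rw [mulVec_mulVec, mul_nonsing_inv S ((isUnit_iff_isUnit_det S).mp hS), one_mulVec]
  have hST : Sᵀ = S := (CFC.sqrt_nonneg M).posSemidef.isHermitian
  calc v ⬝ᵥ v = w ⬝ᵥ M *ᵥ w := by
        rw [← hSw, dotProduct_mulVec, ← mulVec_transpose, hST, mulVec_mulVec,
          CFC.sqrt_mul_sqrt_self M hM.posSemidef.nonneg, dotProduct_comm]
    _ ≤ σ * (w ⬝ᵥ w) := dotProduct_mulVec_le_of_le_algebraMap h w

end

theorem stmt_4_general {n N s : ℕ} (A : Matrix (Fin n) (Fin N) ℝ)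
    (hpd : (A * Aᵀ).PosDef) (σmax : ℝ)
    (hσ₁ : ∀ i, hpd.isHermitian.eigenvalues i ≤ σmax)
    (hσ₂ : ∃ i, hpd.isHermitian.eigenvalues i = σmax)
    (δ : ℝ)
    (hRIP : ∀ z : Fin N → ℝ, IsSparse s z →
      (1 - δ) * eucNorm z ^ 2 ≤ eucNorm (A *ᵥ z) ^ 2 ∧
        eucNorm (A *ᵥ z) ^ 2 ≤ (1 + δ) * eucNorm z ^ 2) :
    ∀ z : Fin N → ℝ, IsSparse s z →
      ((1 - δ) / σmax) * eucNorm z ^ 2 ≤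
        eucNorm ((hpd.posSemidef.sqrt)⁻¹ *ᵥ (A *ᵥ z)) ^ 2 := by
  intro z hz
  obtain ⟨i, hi⟩ := hσ₂
  have hσ : 0 < σmax := hi ▸ hpd.eigenvalues_pos i
  have hAz := hpd.dotProduct_self_le_of_le_algebraMap
    (hpd.isHermitian.le_algebraMap_of_eigenvalues_le hσ₁) (A *ᵥ z)
  rw [← hpd.posSemidef.sqrt_eq_cfcSqrt] at hAz
  simp only [eucNorm_sq] at hRIP ⊢
  rw [div_mul_eq_mul_div, div_le_iff₀ hσ, mul_comm _ σmax]
  exact (hRIP z hz).1.trans hAz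

/-- the P-RIP constant is bounded via the RIP constant and the
largest eigenvalue of `AA*`. -/
theorem stmt_4 {n N s : ℕ} (hnN : n < N) (A : Matrix (Fin n) (Fin N) ℝ)
    (hpd : (A * Aᵀ).PosDef) (σmax : ℝ)
    (hσ₁ : ∀ i, hpd.isHermitian.eigenvalues i ≤ σmax)
    (hσ₂ : ∃ i, hpd.isHermitian.eigenvalues i = σmax)
    (δ : ℝ) (hδ0 : 0 ≤ δ) (hδ1 : δ < 1)
    (hRIP : ∀ z : Fin N → ℝ, IsSparse s z →
      (1 - δ) * eucNorm z ^ 2 ≤ eucNorm (A *ᵥ z) ^ 2 ∧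
        eucNorm (A *ᵥ z) ^ 2 ≤ (1 + δ) * eucNorm z ^ 2) :
    ∀ z : Fin N → ℝ, IsSparse s z →
      ((1 - δ) / σmax) * eucNorm z ^ 2 ≤
        eucNorm ((hpd.posSemidef.sqrt)⁻¹ *ᵥ (A *ᵥ z)) ^ 2 :=
  stmt_4_general A hpd σmax hσ₁ hσ₂ δ hRIP
end

section
/- Let A ∈ ℝ^{n×N} have full row rank and let x ∈ ℝ^N be s-sparse with Ax = b. Let δ_{2s} be a 2s-th order RIP constant and γ_{3s} a (3s)-th order P-RIP constant for A with δ_{2s} + √2 γ_{3s} < 1. Suppose {x^k}, {u^k}, {T_k} follow the NST+HT+FB iteration with A x^0 = b (and each A_{T_k}* A_{T_k} invertible). Then the sequence {u^k} reaches x in finitely many steps: there exists K such that u^k = x for all k ≥ K. -/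
/-!
Let `w_k = u^k - x` and let `a_k = ‖x_{T_kᶜ}‖²` be the part of `x` missed by `T_k`. The feedback
step makes `A w_k` orthogonal to the columns of `A_{T_k}`, so `‖A h‖² = ⟨A h, A x_{T_kᶜ}⟩` for
`h = (w_k)_{T_k}`; the RIP bounds the left side below and the cross term above, giving
`(1 - δ)² ‖w_k‖² ≤ a_k`. The projection step gives `x^{k+1} - x = P w_k`, and since `T_{k+1}`
picks the largest entries of `x^{k+1}`, `a_{k+1} ≤ 2 ‖(P w_k)_Ω‖²` with `Ω = supp x ∆ T_{k+1}`.
As `P` is a symmetric idempotent, `‖(P w)_Ω‖² = ⟨P (P w)_Ω, P w⟩`, and the P-RIP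
(`‖P z‖² ≤ γ ‖z‖²` for sparse `z`) gives `a_{k+1} ≤ 2γ² ‖w_k‖² ≤ 2γ²/(1 - δ)² a_k`. The ratio is
below `1`, so `a_k → 0`; once `a_k` is below every nonzero `x_i²`, `T_k ⊇ supp x`, `a_k = 0` and
`u^k = x`.
-/

open Matrix Finset Filter Topology

/-- Euclidean norm of a vector. -/
noncomputable def euclNorm {k : ℕ} (x : Fin k → ℝ) : ℝ := Real.sqrt (∑ i, x i ^ 2)

/-- The positive semidefinite square root of a positive semidefinite matrix
(the definition of `Matrix.PosSemidef.sqrt` in the older Mathlib, which is gone). -/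
noncomputable def psdSqrt {m : Type*} [Fintype m] [DecidableEq m] {M : Matrix m m ℝ}
    (hM : M.PosSemidef) : Matrix m m ℝ :=
  (hM.1.eigenvectorUnitary : Matrix m m ℝ) *
    diagonal (fun i => Real.sqrt (hM.1.eigenvalues i)) *
    (star hM.1.eigenvectorUnitary : Matrix m m ℝ)

section EuclNorm

variable {k : ℕ}

lemma euclNorm_eq_norm (x : Fin k → ℝ) : euclNorm x = ‖WithLp.toLp 2 x‖ := by
  simp [euclNorm, EuclideanSpace.norm_eq]

lemma euclNorm_nonneg (x : Fin k → ℝ) : 0 ≤ euclNorm x := Real.sqrt_nonneg _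

lemma euclNorm_sq (x : Fin k → ℝ) : euclNorm x ^ 2 = x ⬝ᵥ x := by
  rw [euclNorm, Real.sq_sqrt (Finset.sum_nonneg fun i _ => sq_nonneg _)]
  simp [dotProduct, sq]

lemma euclNorm_smul (c : ℝ) (x : Fin k → ℝ) : euclNorm (c • x) = |c| * euclNorm x := by
  simp [euclNorm_eq_norm, norm_smul]

lemma dotProduct_le_euclNorm_mul_euclNorm (x y : Fin k → ℝ) :
    x ⬝ᵥ y ≤ euclNorm x * euclNorm y := by
  simpa [euclNorm_eq_norm, EuclideanSpace.inner_toLp_toLp, dotProduct_comm]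
    using real_inner_le_norm (WithLp.toLp 2 x) (WithLp.toLp 2 y)

lemma euclNorm_eq_zero {x : Fin k → ℝ} : euclNorm x = 0 ↔ x = 0 := by
  simp [euclNorm_eq_norm]

end EuclNorm

section Sparse

variable {k : ℕ}

lemma isSparse_of_support_subset {s : ℕ} {z : Fin k → ℝ} {T : Finset (Fin k)}
    (hz : Function.support z ⊆ T) (hT : T.card ≤ s) : IsSparse s z :=
  le_trans (Finset.card_le_card fun _ hi => hz (Finset.mem_filter.1 hi).2) hT

lemma IsSparse.exists_support_subset {s : ℕ} {x : Fin k → ℝ} (hx : IsSparse s x) :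
    ∃ S : Finset (Fin k), Function.support x ⊆ S ∧ S.card ≤ s :=
  ⟨_, fun i hi => by simpa using hi, hx⟩

lemma dotProduct_eq_zero_of_disjoint {y z : Fin k → ℝ} {U V : Finset (Fin k)}
    (hy : Function.support y ⊆ U) (hz : Function.support z ⊆ V) (hUV : Disjoint U V) :
    y ⬝ᵥ z = 0 := by
  refine Finset.sum_eq_zero fun i _ => ?_
  by_cases hi : i ∈ U
  · rw [Function.notMem_support.1 fun h => Finset.disjoint_left.1 hUV hi (hz h), mul_zero]
  · rw [Function.notMem_support.1 fun h => hi (hy h), zero_mul]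

lemma euclNorm_sub_sq_of_disjoint {y z : Fin k → ℝ} {U V : Finset (Fin k)}
    (hy : Function.support y ⊆ U) (hz : Function.support z ⊆ V) (hUV : Disjoint U V) :
    euclNorm (y - z) ^ 2 = euclNorm y ^ 2 + euclNorm z ^ 2 := by
  have h := dotProduct_eq_zero_of_disjoint hy hz hUV
  simp only [euclNorm_sq, sub_dotProduct, dotProduct_sub, dotProduct_comm z y, h]
  ring

end Sparse

def HasRIP {n N : ℕ} (A : Matrix (Fin n) (Fin N) ℝ) (m : ℕ) (δ : ℝ) : Prop :=
  ∀ z : Fin N → ℝ, IsSparse m z →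
    (1 - δ) * euclNorm z ^ 2 ≤ euclNorm (A *ᵥ z) ^ 2 ∧
      euclNorm (A *ᵥ z) ^ 2 ≤ (1 + δ) * euclNorm z ^ 2

namespace HasRIP

variable {n N m : ℕ} {A : Matrix (Fin n) (Fin N) ℝ} {δ : ℝ}
  {y z : Fin N → ℝ} {U V : Finset (Fin N)}

lemma dotProduct_le_mul_add_sq_div_two_of_disjoint (hA : HasRIP A m δ)
    (hy : Function.support y ⊆ U) (hz : Function.support z ⊆ V) (hUV : Disjoint U V)
    (hcard : (U ∪ V).card ≤ m) :
    (A *ᵥ y) ⬝ᵥ (A *ᵥ z) ≤ δ * (euclNorm y ^ 2 + euclNorm z ^ 2) / 2 := by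
  have hsp : ∀ c : ℝ, IsSparse m (y + c • z) := fun c =>
    isSparse_of_support_subset
      (((Function.support_add _ _).trans (Set.union_subset_union hy
        ((Function.support_const_smul_subset c z).trans hz))).trans
        (Finset.coe_union U V).superset) hcard
  have hyz := dotProduct_eq_zero_of_disjoint hy hz hUV
  have hadd := (hA _ (hsp 1)).2
  have hsub := (hA _ (hsp (-1))).1
  simp only [one_smul, neg_one_smul, ← sub_eq_add_neg] at hadd hsub
  simp only [euclNorm_sq, mulVec_add, mulVec_sub, add_dotProduct, dotProduct_add,
    sub_dotProduct, dotProduct_sub, dotProduct_comm z y, hyz,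
    dotProduct_comm (A *ᵥ z) (A *ᵥ y)] at hadd hsub ⊢
  linarith

lemma dotProduct_le_of_disjoint (hA : HasRIP A m δ) (hy : Function.support y ⊆ U)
    (hz : Function.support z ⊆ V) (hUV : Disjoint U V) (hcard : (U ∪ V).card ≤ m) :
    (A *ᵥ y) ⬝ᵥ (A *ᵥ z) ≤ δ * (euclNorm y * euclNorm z) := by
  rcases eq_or_ne y 0 with rfl | hy0
  · simp [euclNorm_eq_norm]
  rcases eq_or_ne z 0 with rfl | hz0
  · simp [euclNorm_eq_norm]
  have hpy : 0 < euclNorm y := (euclNorm_nonneg y).lt_of_ne' (euclNorm_eq_zero.not.2 hy0)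
  have hpz : 0 < euclNorm z := (euclNorm_nonneg z).lt_of_ne' (euclNorm_eq_zero.not.2 hz0)
  have h := hA.dotProduct_le_mul_add_sq_div_two_of_disjoint
    ((Function.support_const_smul_subset (euclNorm y)⁻¹ y).trans hy)
    ((Function.support_const_smul_subset (euclNorm z)⁻¹ z).trans hz) hUV hcard
  rw [euclNorm_smul, euclNorm_smul, abs_inv, abs_inv, abs_of_pos hpy, abs_of_pos hpz,
    inv_mul_cancel₀ hpy.ne', inv_mul_cancel₀ hpz.ne', mulVec_smul, mulVec_smul,
    smul_dotProduct, dotProduct_smul, smul_eq_mul, smul_eq_mul] at h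
  calc (A *ᵥ y) ⬝ᵥ (A *ᵥ z)
      = euclNorm y * euclNorm z * ((euclNorm y)⁻¹ * ((euclNorm z)⁻¹ * (A *ᵥ y ⬝ᵥ A *ᵥ z))) := by
        field_simp
    _ ≤ euclNorm y * euclNorm z * δ := by
        gcongr
        linarith
    _ = δ * (euclNorm y * euclNorm z) := mul_comm _ _

lemma sq_mul_euclNorm_sub_sq_le (hA : HasRIP A m δ) (hδ0 : 0 ≤ δ) (hδ1 : δ ≤ 1)
    {h c : Fin N → ℝ} (hh : Function.support h ⊆ U)
    (hc : Function.support c ⊆ V) (hUV : Disjoint U V) (hcard : (U ∪ V).card ≤ m)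
    (horth : (A *ᵥ h) ⬝ᵥ (A *ᵥ (h - c)) = 0) :
    (1 - δ) ^ 2 * euclNorm (h - c) ^ 2 ≤ euclNorm c ^ 2 := by
  have hlow := (hA h (isSparse_of_support_subset
    (hh.trans (Finset.coe_subset.2 Finset.subset_union_left)) hcard)).1
  have hcross := hA.dotProduct_le_of_disjoint hh hc hUV hcard
  rw [mulVec_sub, dotProduct_sub, sub_eq_zero, ← euclNorm_sq] at horth
  have hhc : (1 - δ) * euclNorm h ≤ δ * euclNorm c := by
    rcases (euclNorm_nonneg h).eq_or_lt with h0 | hpos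
    · rw [← h0, mul_zero]
      exact mul_nonneg hδ0 (euclNorm_nonneg c)
    · refine le_of_mul_le_mul_right ?_ hpos
      nlinarith
  have hsq : ((1 - δ) * euclNorm h) ^ 2 ≤ (δ * euclNorm c) ^ 2 :=
    pow_le_pow_left₀ (mul_nonneg (by linarith) (euclNorm_nonneg h)) hhc 2
  rw [euclNorm_sub_sq_of_disjoint hh hc hUV]
  nlinarith [sq_nonneg (euclNorm c), mul_nonneg hδ0 (sub_nonneg.2 hδ1)]

end HasRIP

section Columns

variable {n N : ℕ} (A : Matrix (Fin n) (Fin N) ℝ) (T : Finset (Fin N))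

lemma cols_mulVec_subv (z : Fin N → ℝ) :
    cols A T *ᵥ subv z T = A *ᵥ (↑T : Set (Fin N)).indicator z := by
  ext r
  simp only [mulVec, dotProduct, cols, subv, of_apply, Set.indicator_apply, Finset.mem_coe,
    mul_ite, mul_zero, Finset.sum_ite_mem, Finset.univ_inter]
  exact Finset.sum_coe_sort T fun i => A r i * z i

lemma mulVec_indicator_dotProduct_eq_zero {z : Fin N → ℝ} {r : Fin n → ℝ}
    (hr : (cols A T)ᵀ *ᵥ r = 0) :
    (A *ᵥ (↑T : Set (Fin N)).indicator z) ⬝ᵥ r = 0 := by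
  rw [← cols_mulVec_subv, dotProduct_comm, dotProduct_mulVec, ← mulVec_transpose, hr,
    zero_dotProduct]

lemma transpose_cols_mulVec_sub_eq_zero (hG : IsUnit ((cols A T)ᵀ * cols A T))
    {x u : Fin N → ℝ} (hu₁ : ∀ i, ∀ hi : i ∈ T, u i = x i + fb A T x ⟨i, hi⟩)
    (hu₂ : ∀ i ∉ T, u i = 0) :
    (cols A T)ᵀ *ᵥ (A *ᵥ (u - x)) = 0 := by
  have hT : subv (u - x) T = fb A T x := funext fun i => by simp [subv, hu₁ i i.2]
  have hTc : subv (u - x) Tᶜ = -subv x Tᶜ :=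
    funext fun i => by simp [subv, hu₂ i (Finset.mem_compl.1 i.2)]
  have hsplit : A *ᵥ (u - x) = cols A T *ᵥ subv (u - x) T + cols A Tᶜ *ᵥ subv (u - x) Tᶜ := by
    rw [cols_mulVec_subv, cols_mulVec_subv, ← mulVec_add, Finset.coe_compl,
      Set.indicator_self_add_compl]
  rw [hsplit, hT, hTc, mulVec_neg, mulVec_add, mulVec_mulVec, fb, mulVec_mulVec,
    mul_nonsing_inv _ ((isUnit_iff_isUnit_det _).1 hG), one_mulVec, mulVec_neg, add_neg_cancel]

end Columns

section Projection

variable {n N : ℕ} (A : Matrix (Fin n) (Fin N) ℝ)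

/-- The paper's `P`, the orthogonal projection onto `ker A`. -/
noncomputable def kerProj : Matrix (Fin N) (Fin N) ℝ := 1 - Aᵀ * (A * Aᵀ)⁻¹ * A

lemma transpose_kerProj : (kerProj A)ᵀ = kerProj A := by
  simp [kerProj, transpose_nonsing_inv, Matrix.mul_assoc]

variable {A}

lemma mul_kerProj (hA : IsUnit (A * Aᵀ).det) : A * kerProj A = 0 := by
  rw [kerProj, Matrix.mul_sub, Matrix.mul_one, ← Matrix.mul_assoc, ← Matrix.mul_assoc,
    mul_nonsing_inv _ hA, Matrix.one_mul, sub_self]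

lemma kerProj_mulVec_of_mulVec_eq_zero {v : Fin N → ℝ} (hv : A *ᵥ v = 0) :
    kerProj A *ᵥ v = v := by
  rw [kerProj, sub_mulVec, one_mulVec, ← mulVec_mulVec, hv, mulVec_zero, sub_zero]

lemma kerProj_mul_self (hA : IsUnit (A * Aᵀ).det) : kerProj A * kerProj A = kerProj A := by
  nth_rw 1 [kerProj]
  rw [Matrix.sub_mul, Matrix.one_mul, Matrix.mul_assoc _ A, mul_kerProj hA, Matrix.mul_zero,
    sub_zero]

lemma euclNorm_kerProj_mulVec_sq (hA : IsUnit (A * Aᵀ).det) (z : Fin N → ℝ) :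
    euclNorm (kerProj A *ᵥ z) ^ 2 = euclNorm z ^ 2 - (A *ᵥ z) ⬝ᵥ ((A * Aᵀ)⁻¹ *ᵥ (A *ᵥ z)) := by
  rw [euclNorm_sq, euclNorm_sq, dotProduct_mulVec, ← mulVec_transpose, transpose_kerProj,
    mulVec_mulVec, kerProj_mul_self hA, dotProduct_comm, kerProj, sub_mulVec, one_mulVec,
    dotProduct_sub, ← mulVec_mulVec, ← mulVec_mulVec, dotProduct_mulVec, vecMul_transpose]

end Projection

section PsdSqrt

variable {m : Type*} [Fintype m] [DecidableEq m] {M : Matrix m m ℝ}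

lemma transpose_psdSqrt (hM : M.PosSemidef) : (psdSqrt hM)ᵀ = psdSqrt hM := by
  simp only [psdSqrt, star_eq_conjTranspose, conjTranspose_eq_transpose_of_trivial,
    transpose_mul, diagonal_transpose, transpose_transpose, Matrix.mul_assoc]

lemma psdSqrt_mul_self (hM : M.PosSemidef) : psdSqrt hM * psdSqrt hM = M := by
  set U : Matrix m m ℝ := (hM.1.eigenvectorUnitary : Matrix m m ℝ)
  have hU : (star U) * U = 1 := Unitary.star_mul_self_of_mem hM.1.eigenvectorUnitary.2
  have hD : diagonal (fun i => √(hM.1.eigenvalues i)) * diagonal (fun i => √(hM.1.eigenvalues i))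
      = diagonal (fun i => hM.1.eigenvalues i) := by
    rw [diagonal_mul_diagonal]
    exact congrArg diagonal (funext fun i => Real.mul_self_sqrt (hM.eigenvalues_nonneg i))
  conv_rhs => rw [hM.1.spectral_theorem]
  calc psdSqrt hM * psdSqrt hM
      = U * diagonal (fun i => √(hM.1.eigenvalues i)) * (star U * U) *
          diagonal (fun i => √(hM.1.eigenvalues i)) * star U := by
        simp only [psdSqrt, U, Matrix.mul_assoc]
    _ = _ := by
        rw [hU, Matrix.mul_one, Matrix.mul_assoc _ (diagonal _) (diagonal _), hD]
        rfl

end PsdSqrt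

lemma euclNorm_inv_psdSqrt_mulVec_sq {n : ℕ} {M : Matrix (Fin n) (Fin n) ℝ}
    (hM : M.PosSemidef) (w : Fin n → ℝ) :
    euclNorm ((psdSqrt hM)⁻¹ *ᵥ w) ^ 2 = w ⬝ᵥ (M⁻¹ *ᵥ w) := by
  rw [euclNorm_sq, dotProduct_mulVec, ← mulVec_transpose, transpose_nonsing_inv,
    transpose_psdSqrt, mulVec_mulVec, ← Matrix.mul_inv_rev, psdSqrt_mul_self, dotProduct_comm]

lemma euclNorm_kerProj_mulVec_sq_le {n N : ℕ} {A : Matrix (Fin n) (Fin N) ℝ}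
    (hpd : (A * Aᵀ).PosDef) {γ : ℝ} {z : Fin N → ℝ}
    (hz : (1 - γ) * euclNorm z ^ 2 ≤ euclNorm ((psdSqrt hpd.posSemidef)⁻¹ *ᵥ (A *ᵥ z)) ^ 2) :
    euclNorm (kerProj A *ᵥ z) ^ 2 ≤ γ * euclNorm z ^ 2 := by
  rw [euclNorm_inv_psdSqrt_mulVec_sq] at hz
  rw [euclNorm_kerProj_mulVec_sq (isUnit_iff_ne_zero.2 hpd.det_pos.ne')]
  linarith

section Indicator

variable {k : ℕ}

lemma euclNorm_indicator_sq (U : Finset (Fin k)) (z : Fin k → ℝ) :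
    euclNorm ((↑U : Set (Fin k)).indicator z) ^ 2 = ∑ i ∈ U, z i ^ 2 := by
  rw [euclNorm_sq, dotProduct, ← Finset.sum_subset (Finset.subset_univ U) fun i _ hi => by
    simp [Set.indicator_of_notMem (Finset.mem_coe.not.2 hi)]]
  exact Finset.sum_congr rfl fun i hi => by simp [Set.indicator_of_mem (Finset.mem_coe.2 hi), sq]

lemma indicator_dotProduct_self (s : Set (Fin k)) (z : Fin k → ℝ) :
    s.indicator z ⬝ᵥ s.indicator z = s.indicator z ⬝ᵥ z := by
  refine Finset.sum_congr rfl fun i _ => ?_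
  by_cases hi : i ∈ s <;> simp [hi]

lemma euclNorm_indicator_mulVec_le {P : Matrix (Fin k) (Fin k) ℝ} (hPt : Pᵀ = P)
    (hPP : P * P = P) {m : ℕ} {γ : ℝ} (hγ : 0 ≤ γ)
    (hP : ∀ z, IsSparse m z → euclNorm (P *ᵥ z) ^ 2 ≤ γ * euclNorm z ^ 2)
    {w : Fin k → ℝ} (hw : IsSparse m w) {Ω : Finset (Fin k)} (hΩ : Ω.card ≤ m) :
    euclNorm ((↑Ω : Set (Fin k)).indicator (P *ᵥ w)) ≤ γ * euclNorm w := by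
  set v := (↑Ω : Set (Fin k)).indicator (P *ᵥ w)
  have hP' : ∀ z, IsSparse m z → euclNorm (P *ᵥ z) ≤ √γ * euclNorm z := fun z hz => by
    rw [← Real.sqrt_sq (euclNorm_nonneg (P *ᵥ z)), ← Real.sqrt_sq (euclNorm_nonneg z),
      ← Real.sqrt_mul hγ]
    exact Real.sqrt_le_sqrt (hP z hz)
  have hv : v ⬝ᵥ v = (P *ᵥ v) ⬝ᵥ (P *ᵥ w) :=
    calc v ⬝ᵥ v = v ⬝ᵥ (P *ᵥ w) := indicator_dotProduct_self _ _
      _ = v ⬝ᵥ (P *ᵥ (P *ᵥ w)) := by rw [mulVec_mulVec, hPP]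
      _ = (P *ᵥ v) ⬝ᵥ (P *ᵥ w) := by rw [dotProduct_mulVec, ← mulVec_transpose, hPt]
  have hsq : euclNorm v ^ 2 ≤ γ * (euclNorm v * euclNorm w) :=
    calc euclNorm v ^ 2 = (P *ᵥ v) ⬝ᵥ (P *ᵥ w) := by rw [euclNorm_sq, hv]
      _ ≤ euclNorm (P *ᵥ v) * euclNorm (P *ᵥ w) := dotProduct_le_euclNorm_mul_euclNorm _ _
      _ ≤ (√γ * euclNorm v) * (√γ * euclNorm w) :=
        mul_le_mul (hP' v (isSparse_of_support_subset Set.support_indicator_subset hΩ))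
          (hP' w hw) (euclNorm_nonneg _) (mul_nonneg (Real.sqrt_nonneg γ) (euclNorm_nonneg v))
      _ = γ * (euclNorm v * euclNorm w) := by
        rw [mul_mul_mul_comm, Real.mul_self_sqrt hγ]
  nlinarith [euclNorm_nonneg v, mul_nonneg hγ (euclNorm_nonneg w)]

end Indicator

lemma Finset.sum_le_sum_of_card_le_of_forall_le {ι : Type*} {f : ι → ℝ} {s t : Finset ι}
    (hf : ∀ i ∈ t, 0 ≤ f i) (hst : s.card ≤ t.card) (h : ∀ j ∈ s, ∀ i ∈ t, f j ≤ f i) :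
    ∑ j ∈ s, f j ≤ ∑ i ∈ t, f i := by
  rcases t.eq_empty_or_nonempty with rfl | ht
  · simp [Finset.card_eq_zero.1 (Nat.le_zero.1 hst)]
  calc ∑ j ∈ s, f j ≤ s.card • t.inf' ht f :=
        Finset.sum_le_card_nsmul _ _ _ fun j hj => Finset.le_inf' _ _ fun i hi => h j hj i hi
    _ ≤ t.card • t.inf' ht f :=
        nsmul_le_nsmul_left ((Finset.le_inf'_iff _ _).2 hf) hst
    _ ≤ ∑ i ∈ t, f i := Finset.card_nsmul_le_sum _ _ _ fun i hi => Finset.inf'_le _ hi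

lemma euclNorm_indicator_compl_sq_le {N : ℕ} {x y : Fin N → ℝ} {S T : Finset (Fin N)}
    (hx : Function.support x ⊆ S) (hST : S.card ≤ T.card)
    (hT : ∀ i ∈ T, ∀ j ∉ T, |y j| ≤ |y i|) :
    euclNorm ((↑Tᶜ : Set (Fin N)).indicator x) ^ 2 ≤
      2 * euclNorm ((↑(S \ T ∪ T \ S) : Set (Fin N)).indicator (y - x)) ^ 2 := by
  have hx0 : ∀ i ∉ S, x i = 0 := fun i hi => Function.notMem_support.1 fun h => hi (hx h)
  have hmiss : ∑ i ∈ Tᶜ, x i ^ 2 = ∑ i ∈ S \ T, x i ^ 2 := by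
    refine (Finset.sum_subset (fun i hi => Finset.mem_compl.2 (Finset.mem_sdiff.1 hi).2)
      fun i hi hiST => ?_).symm
    rw [hx0 i fun hiS => hiST (Finset.mem_sdiff.2 ⟨hiS, Finset.mem_compl.1 hi⟩)]
    ring
  have hy : ∑ i ∈ S \ T, y i ^ 2 ≤ ∑ i ∈ T \ S, (y - x) i ^ 2 := by
    have hyx : ∑ i ∈ T \ S, (y - x) i ^ 2 = ∑ i ∈ T \ S, y i ^ 2 :=
      Finset.sum_congr rfl fun i hi => by rw [Pi.sub_apply, hx0 i (Finset.mem_sdiff.1 hi).2,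
        sub_zero]
    rw [hyx]
    exact Finset.sum_le_sum_of_card_le_of_forall_le (fun _ _ => sq_nonneg _)
      (Finset.card_sdiff_le_card_sdiff_iff.2 hST) fun j hj i hi =>
        sq_le_sq.2 (hT i (Finset.mem_sdiff.1 hi).1 j (Finset.mem_sdiff.1 hj).2)
  have hxy : ∑ i ∈ S \ T, x i ^ 2 ≤ ∑ i ∈ S \ T, (2 * y i ^ 2 + 2 * (y - x) i ^ 2) :=
    Finset.sum_le_sum fun i _ => by
      rw [Pi.sub_apply]
      nlinarith [sq_nonneg (2 * y i - x i)]
  rw [euclNorm_indicator_sq, euclNorm_indicator_sq, Finset.sum_union disjoint_sdiff_sdiff, hmiss]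
  rw [Finset.sum_add_distrib, ← Finset.mul_sum, ← Finset.mul_sum] at hxy
  linarith

lemma tendsto_zero_of_succ_le_mul {a : ℕ → ℝ} {q : ℝ} (ha : ∀ k, 0 ≤ a k) (hq0 : 0 ≤ q)
    (hq1 : q < 1) (h : ∀ k, a (k + 1) ≤ q * a k) : Tendsto a atTop (𝓝 0) :=
  squeeze_zero ha (fun k => le_geom hq0 k fun j _ => h j) <| by
    simpa using (tendsto_pow_atTop_nhds_zero_of_lt_one hq0 hq1).mul_const (a 0)

/-- Once the missed part of `x` is smaller than every nonzero entry of `x`, nothing is missed. -/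
lemma eventually_indicator_compl_eq_zero {N : ℕ} {x : Fin N → ℝ} {T : ℕ → Finset (Fin N)}
    (h : Tendsto (fun k => euclNorm ((↑(T k)ᶜ : Set (Fin N)).indicator x) ^ 2) atTop (𝓝 0)) :
    ∀ᶠ k in atTop, (↑(T k)ᶜ : Set (Fin N)).indicator x = 0 := by
  have hi : ∀ i, ∀ᶠ k in atTop,
      x i ≠ 0 → euclNorm ((↑(T k)ᶜ : Set (Fin N)).indicator x) ^ 2 < x i ^ 2 := fun i => by
    by_cases hxi : x i = 0
    · exact Eventually.of_forall fun _ h => absurd hxi h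
    · exact (h.eventually (gt_mem_nhds (by positivity))).mono fun _ hk _ => hk
  filter_upwards [eventually_all.2 hi] with k hk
  funext i
  by_contra hne
  obtain ⟨hiT, hxi⟩ := Set.indicator_apply_ne_zero.1 hne
  have hle : x i ^ 2 ≤ euclNorm ((↑(T k)ᶜ : Set (Fin N)).indicator x) ^ 2 := by
    rw [euclNorm_indicator_sq]
    exact Finset.single_le_sum (f := fun j => x j ^ 2) (fun _ _ => sq_nonneg _) hiT
  exact (hk i hxi).not_ge hle

structure IsNSTHTFB {n N : ℕ} (A : Matrix (Fin n) (Fin N) ℝ) (s : ℕ) (xk u : ℕ → Fin N → ℝ)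
    (Tk : ℕ → Finset (Fin N)) : Prop where
  card_eq : ∀ k, (Tk k).card = s
  abs_le_abs : ∀ k, ∀ i ∈ Tk k, ∀ j ∉ Tk k, |xk k j| ≤ |xk k i|
  isUnit_gram : ∀ k, IsUnit ((cols A (Tk k))ᵀ * cols A (Tk k))
  u_of_mem : ∀ k, ∀ i, ∀ hi : i ∈ Tk k, u k i = xk k i + fb A (Tk k) (xk k) ⟨i, hi⟩
  u_of_notMem : ∀ k, ∀ i ∉ Tk k, u k i = 0
  succ : ∀ k, xk (k + 1) = xk k + kerProj A *ᵥ (u k - xk k)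

namespace IsNSTHTFB

variable {n N s : ℕ} {A : Matrix (Fin n) (Fin N) ℝ} {xk u : ℕ → Fin N → ℝ}
  {Tk : ℕ → Finset (Fin N)} {x : Fin N → ℝ} {S : Finset (Fin N)}

lemma mulVec_eq (hit : IsNSTHTFB A s xk u Tk) (hA : IsUnit (A * Aᵀ).det) (k : ℕ) :
    A *ᵥ xk k = A *ᵥ xk 0 := by
  induction k with
  | zero => rfl
  | succ k ih => rw [hit.succ, mulVec_add, mulVec_mulVec, mul_kerProj hA, zero_mulVec, add_zero, ih]

lemma support_sub_subset (hit : IsNSTHTFB A s xk u Tk) (hxS : Function.support x ⊆ S) (k : ℕ) :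
    Function.support (u k - x) ⊆ ↑(Tk k ∪ S) := fun i hi => by
  by_cases hiT : i ∈ Tk k
  · exact Finset.mem_union_left _ hiT
  · refine Finset.mem_union_right _ (hxS fun hx => hi ?_)
    rw [Pi.sub_apply, hit.u_of_notMem k i hiT, hx, sub_zero]

lemma isSparse_sub (hit : IsNSTHTFB A s xk u Tk) (hxS : Function.support x ⊆ S)
    (hS : S.card ≤ s) (k : ℕ) : IsSparse (2 * s) (u k - x) :=
  isSparse_of_support_subset (hit.support_sub_subset hxS k)
    ((Finset.card_union_le _ _).trans (by rw [hit.card_eq k]; omega))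

/-- The feedback makes `A (u k - x)` orthogonal to the columns of `A_{Tk k}`. -/
lemma sq_mul_euclNorm_sub_sq_le (hit : IsNSTHTFB A s xk u Tk) {δ : ℝ} (hRIP : HasRIP A (2 * s) δ)
    (hδ0 : 0 ≤ δ) (hδ1 : δ ≤ 1) (hxS : Function.support x ⊆ S) (hS : S.card ≤ s) {k : ℕ}
    (hfeas : A *ᵥ xk k = A *ᵥ x) :
    (1 - δ) ^ 2 * euclNorm (u k - x) ^ 2 ≤
      euclNorm ((↑(Tk k)ᶜ : Set (Fin N)).indicator x) ^ 2 := by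
  set T := Tk k
  have hw : u k - x = (↑T : Set (Fin N)).indicator (u k - x) - (↑Tᶜ : Set (Fin N)).indicator x := by
    funext i
    by_cases hi : i ∈ T
    · simp [hi]
    · simp [hi, hit.u_of_notMem k i hi]
  have hres : A *ᵥ (u k - x) = A *ᵥ (u k - xk k) := by rw [mulVec_sub, mulVec_sub, hfeas]
  have horth := mulVec_indicator_dotProduct_eq_zero A T (z := u k - x) (hres ▸
    transpose_cols_mulVec_sub_eq_zero A T (hit.isUnit_gram k) (hit.u_of_mem k) (hit.u_of_notMem k))
  rw [hw]
  refine hRIP.sq_mul_euclNorm_sub_sq_le hδ0 hδ1 (V := S \ T) Set.support_indicator_subset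
    (fun i hi => ?_) Finset.disjoint_sdiff ?_ (by rwa [← hw])
  · obtain ⟨hiT, hxi⟩ := Set.indicator_apply_ne_zero.1 hi
    exact Finset.mem_sdiff.2 ⟨hxS hxi, Finset.mem_compl.1 hiT⟩
  · rw [Finset.union_sdiff_self_eq_union]
    exact (Finset.card_union_le _ _).trans (by rw [hit.card_eq k]; omega)

lemma euclNorm_indicator_compl_succ_sq_le (hit : IsNSTHTFB A s xk u Tk)
    (hA : IsUnit (A * Aᵀ).det) {γ : ℝ} (hγ : 0 ≤ γ)
    (hP : ∀ z, IsSparse (2 * s) z → euclNorm (kerProj A *ᵥ z) ^ 2 ≤ γ * euclNorm z ^ 2)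
    (hxS : Function.support x ⊆ S) (hS : S.card ≤ s) {k : ℕ} (hfeas : A *ᵥ xk k = A *ᵥ x) :
    euclNorm ((↑(Tk (k + 1))ᶜ : Set (Fin N)).indicator x) ^ 2 ≤
      2 * γ ^ 2 * euclNorm (u k - x) ^ 2 := by
  set T := Tk (k + 1)
  have herr : xk (k + 1) - x = kerProj A *ᵥ (u k - x) := by
    have hfix : kerProj A *ᵥ (xk k - x) = xk k - x :=
      kerProj_mulVec_of_mulVec_eq_zero (by rw [mulVec_sub, hfeas, sub_self])
    rw [hit.succ, show u k - x = (u k - xk k) + (xk k - x) by abel, mulVec_add, hfix]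
    abel
  have hΩ : (S \ T ∪ T \ S).card ≤ 2 * s :=
    calc (S \ T ∪ T \ S).card ≤ (S ∪ T).card :=
          Finset.card_le_card (Finset.union_subset (Finset.sdiff_subset.trans
            Finset.subset_union_left) (Finset.sdiff_subset.trans Finset.subset_union_right))
      _ ≤ 2 * s := (Finset.card_union_le _ _).trans (by rw [hit.card_eq]; omega)
  have hthr := euclNorm_indicator_compl_sq_le hxS (hS.trans (hit.card_eq (k + 1)).ge)
    (hit.abs_le_abs (k + 1))
  have hcon := euclNorm_indicator_mulVec_le (transpose_kerProj A) (kerProj_mul_self hA) hγ hP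
    (hit.isSparse_sub hxS hS k) hΩ
  rw [herr] at hthr
  calc _ ≤ 2 * euclNorm ((↑(S \ T ∪ T \ S) : Set (Fin N)).indicator (kerProj A *ᵥ (u k - x))) ^ 2 :=
        hthr
    _ ≤ 2 * (γ * euclNorm (u k - x)) ^ 2 := by gcongr; exact euclNorm_nonneg _
    _ = 2 * γ ^ 2 * euclNorm (u k - x) ^ 2 := by ring

end IsNSTHTFB

theorem stmt_8_general {n N s : ℕ} (A : Matrix (Fin n) (Fin N) ℝ)
    (hpd : (A * Aᵀ).PosDef)
    (x : Fin N → ℝ) (hx : IsSparse s x) (b : Fin n → ℝ) (hb : A *ᵥ x = b)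
    (δ₂ γ : ℝ) (hδ₂0 : 0 ≤ δ₂) (hγ0 : 0 ≤ γ)
    (hRIP2 : ∀ z : Fin N → ℝ, IsSparse (2*s) z →
      (1 - δ₂) * euclNorm z ^ 2 ≤ euclNorm (A *ᵥ z) ^ 2 ∧
        euclNorm (A *ᵥ z) ^ 2 ≤ (1 + δ₂) * euclNorm z ^ 2)
    (hPRIP : ∀ z : Fin N → ℝ, IsSparse (3*s) z →
      (1 - γ) * euclNorm z ^ 2 ≤ euclNorm ((psdSqrt hpd.posSemidef)⁻¹ *ᵥ (A *ᵥ z)) ^ 2)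
    (hcond : δ₂ + Real.sqrt 2 * γ < 1)
    (xk u : ℕ → Fin N → ℝ) (Tk : ℕ → Finset (Fin N))
    (hTkcard : ∀ k, (Tk k).card = s)
    (hTkmax : ∀ k, ∀ i ∈ Tk k, ∀ j ∉ Tk k, |xk k j| ≤ |xk k i|)
    (hginv : ∀ k, IsUnit ((cols A (Tk k))ᵀ * cols A (Tk k)))
    (hu1 : ∀ k, ∀ i, ∀ hi : i ∈ Tk k, u k i = xk k i + fb A (Tk k) (xk k) ⟨i, hi⟩)
    (hu2 : ∀ k, ∀ i ∉ Tk k, u k i = 0)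
    (hxk : ∀ k, xk (k+1) = xk k + (1 - Aᵀ * (A * Aᵀ)⁻¹ * A) *ᵥ (u k - xk k))
    (hx0 : A *ᵥ xk 0 = b) :
    ∃ K, ∀ k, K ≤ k → u k = x := by
  have hit : IsNSTHTFB A s xk u Tk := ⟨hTkcard, hTkmax, hginv, hu1, hu2, hxk⟩
  have hA : IsUnit (A * Aᵀ).det := isUnit_iff_ne_zero.2 hpd.det_pos.ne'
  obtain ⟨S, hxS, hS⟩ := hx.exists_support_subset
  have hfeas : ∀ k, A *ᵥ xk k = A *ᵥ x := fun k => by rw [hit.mulVec_eq hA, hx0, hb]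
  have hP : ∀ z, IsSparse (2 * s) z → euclNorm (kerProj A *ᵥ z) ^ 2 ≤ γ * euclNorm z ^ 2 :=
    fun z hz => euclNorm_kerProj_mulVec_sq_le hpd (hPRIP z (hz.trans (by omega)))
  have hsq2γ : 0 ≤ √2 * γ := by positivity
  have hq : 2 * γ ^ 2 < (1 - δ₂) ^ 2 := by
    simpa [mul_pow] using pow_lt_pow_left₀ (by linarith : √2 * γ < 1 - δ₂) hsq2γ two_ne_zero
  have hpos : 0 < (1 - δ₂) ^ 2 := by nlinarith
  set a : ℕ → ℝ := fun k => euclNorm ((↑(Tk k)ᶜ : Set (Fin N)).indicator x) ^ 2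
  have hfb : ∀ k, (1 - δ₂) ^ 2 * euclNorm (u k - x) ^ 2 ≤ a k := fun k =>
    hit.sq_mul_euclNorm_sub_sq_le hRIP2 hδ₂0 (by linarith) hxS hS (hfeas k)
  have hdecay : ∀ k, a (k + 1) ≤ 2 * γ ^ 2 / (1 - δ₂) ^ 2 * a k := fun k => by
    rw [div_mul_eq_mul_div, le_div_iff₀ hpos]
    nlinarith [hit.euclNorm_indicator_compl_succ_sq_le hA hγ0 hP hxS hS (hfeas k),
      mul_le_mul_of_nonneg_left (hfb k) (by positivity : (0 : ℝ) ≤ 2 * γ ^ 2)]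
  have hlim : Tendsto a atTop (𝓝 0) := tendsto_zero_of_succ_le_mul (fun _ => sq_nonneg _)
    (by positivity) ((div_lt_one hpos).2 hq) hdecay
  obtain ⟨K, hK⟩ := eventually_atTop.1 (eventually_indicator_compl_eq_zero hlim)
  refine ⟨K, fun k hk => sub_eq_zero.1 (euclNorm_eq_zero.1 ?_)⟩
  have hk0 : (1 - δ₂) ^ 2 * euclNorm (u k - x) ^ 2 ≤ 0 := by
    have ha : a k = 0 := by simp only [a, hK k hk]; simp [euclNorm]
    simpa [ha] using hfb k
  exact pow_eq_zero_iff two_ne_zero |>.1 <| le_antisymm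
    (nonpos_of_mul_nonpos_right hk0 hpos) (sq_nonneg _)

/-- NST+HT+FB recovers an exactly sparse solution in finitely many steps. -/
theorem stmt_8 {n N s : ℕ} (hnN : n < N) (A : Matrix (Fin n) (Fin N) ℝ)
    (hpd : (A * Aᵀ).PosDef)
    (x : Fin N → ℝ) (hx : IsSparse s x) (b : Fin n → ℝ) (hb : A *ᵥ x = b)
    (δ₂ γ : ℝ) (hδ₂0 : 0 ≤ δ₂) (hγ0 : 0 ≤ γ)
    (hRIP2 : ∀ z : Fin N → ℝ, IsSparse (2*s) z →
      (1 - δ₂) * euclNorm z ^ 2 ≤ euclNorm (A *ᵥ z) ^ 2 ∧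
        euclNorm (A *ᵥ z) ^ 2 ≤ (1 + δ₂) * euclNorm z ^ 2)
    (hPRIP : ∀ z : Fin N → ℝ, IsSparse (3*s) z →
      (1 - γ) * euclNorm z ^ 2 ≤ euclNorm ((psdSqrt hpd.posSemidef)⁻¹ *ᵥ (A *ᵥ z)) ^ 2)
    (hcond : δ₂ + Real.sqrt 2 * γ < 1)
    (xk u : ℕ → Fin N → ℝ) (Tk : ℕ → Finset (Fin N))
    (hTkcard : ∀ k, (Tk k).card = s)
    (hTkmax : ∀ k, ∀ i ∈ Tk k, ∀ j ∉ Tk k, |xk k j| ≤ |xk k i|)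
    (hginv : ∀ k, IsUnit ((cols A (Tk k))ᵀ * cols A (Tk k)))
    (hu1 : ∀ k, ∀ i, ∀ hi : i ∈ Tk k, u k i = xk k i + fb A (Tk k) (xk k) ⟨i, hi⟩)
    (hu2 : ∀ k, ∀ i ∉ Tk k, u k i = 0)
    (hxk : ∀ k, xk (k+1) = xk k + (1 - Aᵀ * (A * Aᵀ)⁻¹ * A) *ᵥ (u k - xk k))
    (hx0 : A *ᵥ xk 0 = b) :
    ∃ K, ∀ k, K ≤ k → u k = x :=
  stmt_8_general A hpd x hx b hb δ₂ γ hδ₂0 hγ0 hRIP2 hPRIP hcond xk u Tk hTkcard hTkmax hginv hu1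
    hu2 hxk hx0
end
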